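/- For every integer N ≥ 2 and every a coprime to N with 0 < a < N, the sum S_N(a) of the partial quotients in the continued fraction expansion of a/N equals |gen(a, N−a)| + 2, where the expansion used is the one whose last partial quotient is at least 2 (so that |gen(a, N−a)| is the length of the word gen(a, N−a)). -/
import Mathlib


/-- `P s` is the number of distinct subsequences of the binary word `s`
(the letter `A` is `true`, the letter `B` is `false`), including the empty one. -/
def P (s : List Bool) : ℕ := s.sublists.toFinset.card

/-- `PA s` is the number of distinct subsequences of `s` starting with `A` (= `true`),
plus one for the empty subsequence. -/
def PA (s : List Bool) : ℕ :=
  ((s.sublists.toFinset).filter (fun t => t.head? = some true)).card + 1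

/-- `PB s` is the number of distinct subsequences of `s` starting with `B` (= `false`),
plus one for the empty subsequence. -/
def PB (s : List Bool) : ℕ :=
  ((s.sublists.toFinset).filter (fun t => t.head? = some false)).card + 1

/-- `QA s` is the number of distinct subsequences of `s` ending with `A` (= `true`),
plus one for the empty subsequence. -/
def QA (s : List Bool) : ℕ :=
  ((s.sublists.toFinset).filter (fun t => t.getLast? = some true)).card + 1

/-- `QB s` is the number of distinct subsequences of `s` ending with `B` (= `false`),
plus one for the empty subsequence. -/
def QB (s : List Bool) : ℕ :=
  ((s.sublists.toFinset).filter (fun t => t.getLast? = some false)).card + 1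

/-- The word `gen a b`, defined by the Euclidean recursion:
`gen 1 1 = []`, `gen a b = A ∘ gen (a-b) b` if `a > b`, `gen a b = B ∘ gen a (b-a)` if `b > a`. -/
def gen : ℕ → ℕ → List Bool
  | 0, _ => []
  | _ + 1, 0 => []
  | a + 1, b + 1 =>
    if a > b then true :: gen (a - b) (b + 1)
    else if b > a then false :: gen (a + 1) (b - a)
    else []
termination_by a b => a + b
decreasing_by all_goals omega

/-- `star s` swaps all letters `A` and `B` in `s`. -/
def star (s : List Bool) : List Bool := s.map (fun x => !x)

/-- `z n` is the alternating word `ABAB…` of length `n`. -/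
def z : ℕ → List Bool
  | 0 => []
  | n + 1 => true :: star (z n)

/-- The value of the finite simple continued fraction `[c₀; c₁, …, cₘ]`. -/
def cfVal : List ℕ → ℚ
  | [] => 0
  | [c] => (c : ℚ)
  | c :: rest => (c : ℚ) + 1 / cfVal rest

/-- Increment the last entry of a list. -/
def lastInc : List ℕ → List ℕ
  | [] => []
  | [c] => [c + 1]
  | c :: rest => c :: lastInc rest

/-- `blocks ltr [c₀, c₁, …]` is the word `ltr^{c₀} ∘ (!ltr)^{c₁} ∘ ltr^{c₂} ∘ ⋯`. -/
def blocks : Bool → List ℕ → List Bool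
  | _, [] => []
  | ltr, c :: rest => List.replicate c ltr ++ blocks (!ltr) rest

lemma gen_gt {a b : ℕ} (hb : 0 < b) (h : b < a) : gen a b = true :: gen (a - b) b := by
  obtain ⟨a', rfl⟩ : ∃ a', a = a' + 1 := ⟨a - 1, by omega⟩
  obtain ⟨b', rfl⟩ : ∃ b', b = b' + 1 := ⟨b - 1, by omega⟩
  rw [gen]
  simp only [if_pos (by omega : a' > b')]
  rw [show a' + 1 - (b' + 1) = a' - b' from by omega]

lemma gen_lt {a b : ℕ} (ha : 0 < a) (h : a < b) : gen a b = false :: gen a (b - a) := by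
  obtain ⟨a', rfl⟩ : ∃ a', a = a' + 1 := ⟨a - 1, by omega⟩
  obtain ⟨b', rfl⟩ : ∃ b', b = b' + 1 := ⟨b - 1, by omega⟩
  rw [gen]
  rw [if_neg (by omega), if_pos (by omega)]
  rw [show b' + 1 - (a' + 1) = b' - a' from by omega]

lemma gen_len_symm (a b : ℕ) : (gen a b).length = (gen b a).length := by
  by_cases ha : a = 0
  · subst ha; rcases b with _ | b <;> simp [gen]
  by_cases hb : b = 0
  · subst hb; rcases a with _ | a <;> simp [gen]
  rcases lt_trichotomy a b with h | h | h
  · rw [gen_lt (by omega) h, gen_gt (by omega) h]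
    simp [gen_len_symm a (b - a)]
  · subst h; rfl
  · rw [gen_gt (by omega) h, gen_lt (by omega) h]
    simp [gen_len_symm (a - b) b]
termination_by a + b
decreasing_by all_goals omega

lemma gen_len_rep (a r : ℕ) (ha : 0 < a) (hr : 0 < r) :
    ∀ k, (gen a (k * a + r)).length = k + (gen a r).length := by
  intro k
  induction k with
  | zero => simp
  | succ k ih =>
    rw [gen_lt ha (by nlinarith), show (k+1) * a + r - a = k * a + r by ring_nf; omega]
    simp [ih]; omega

lemma gen_one (b : ℕ) (hb : 0 < b) : (gen 1 b).length = b - 1 := by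
  induction b with
  | zero => omega
  | succ b ih =>
    rcases Nat.eq_or_lt_of_le hb with h | h
    · simp [← h, gen]
    · rw [gen_lt one_pos (by omega)]
      simp [ih (by omega)]; omega

lemma one_lt_cfVal : ∀ (cs : List ℕ) (hne : cs ≠ []), (∀ c ∈ cs, 1 ≤ c) →
    2 ≤ cs.getLast hne → 1 < cfVal cs := by
  intro cs
  induction cs with
  | nil => simp
  | cons c rest ih =>
    intro hne hpos hlast
    rcases rest with _ | ⟨d, rest'⟩
    · simp only [cfVal, List.getLast_singleton] at *
      exact_mod_cast by omega
    · have hrest : (d :: rest') ≠ [] := by simp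
      have h1 : 1 < cfVal (d :: rest') := by
        apply ih hrest (fun x hx => hpos x (by simp [hx]))
        rwa [List.getLast_cons hrest] at hlast
      have hc : (1:ℚ) ≤ c := by exact_mod_cast hpos c (by simp)
      show (c:ℚ) + 1 / cfVal (d :: rest') > 1
      have : 0 < 1 / cfVal (d :: rest') := by positivity
      linarith

lemma key_lemma : ∀ (cs : List ℕ) (N a : ℕ), 2 ≤ N → 0 < a → a < N → Nat.Coprime a N →
    ∀ (hne : cs ≠ []), (∀ c ∈ cs, 1 ≤ c) → (2 ≤ cs.length → 2 ≤ cs.getLast hne) →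
    cfVal cs = (N : ℚ) / a → cs.sum = (gen a (N - a)).length + 2 := by
  intro cs
  induction cs with
  | nil => simp
  | cons c rest ih =>
    intro N a hN ha haN hcop hne hpos hlast hval
    have haQ : (0:ℚ) < a := by exact_mod_cast ha
    rcases rest with _ | ⟨d, rest'⟩
    · -- singleton case: cfVal [c] = c = N/a
      have hc : (c:ℚ) = (N:ℚ)/a := hval
      have hca : (c:ℚ) * a = N := by field_simp at hc; linarith
      have hca' : c * a = N := by exact_mod_cast hca
      have hdvd : a ∣ N := ⟨c, by rw [← hca', mul_comm]⟩
      have ha1 : a = 1 := Nat.dvd_one.mp (hcop ▸ Nat.dvd_gcd dvd_rfl hdvd)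
      subst ha1
      have hcN : c = N := by omega
      simp [hcN, gen_one (N - 1) (by omega)]
      omega
    · -- cons case with nonempty rest
      have hrne : (d :: rest') ≠ [] := by simp
      set x := cfVal (d :: rest') with hx
      have hval' : (c:ℚ) + 1 / x = (N:ℚ)/a := hval
      have hlastr : 2 ≤ (d :: rest').getLast hrne := by
        have := hlast (by simp)
        rwa [List.getLast_cons hrne] at this
      have h1x : 1 < x := one_lt_cfVal _ hrne (fun y hy => hpos y (by simp at hy ⊢; tauto)) hlastr
      have hx0 : (0:ℚ) < x := by linarith
      have hinvpos : (0:ℚ) < 1 / x := by positivity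
      have hinvlt : 1 / x < 1 := by rw [div_lt_one hx0]; linarith
      have hltQ : (c:ℚ) < (N:ℚ)/a := by linarith
      have hgtQ : (N:ℚ)/a < (c:ℚ) + 1 := by linarith
      have h2 : c * a < N := by exact_mod_cast (lt_div_iff₀ haQ).mp hltQ
      have h3 : N < c * a + a := by
        have h3Q : (N:ℚ) < (c:ℚ) * a + a := by
          have := (div_lt_iff₀ haQ).mp hgtQ; linarith [this]
        exact_mod_cast h3Q
      set r := N - c * a with hr
      have hr1 : 1 ≤ r := by omega
      have hra : r < a := by omega
      have ha2 : 2 ≤ a := by omega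
      have hc1 : 1 ≤ c := hpos c (by simp)
      have hrQ : (r:ℚ) + (c:ℚ) * a = N := by exact_mod_cast (by omega : r + c * a = N)
      have hrQ0 : (0:ℚ) < r := by exact_mod_cast hr1
      -- x = a / r
      have h1xval : 1 / x = (N:ℚ)/a - c := by linarith
      have h6 : (N:ℚ)/a - c = (r:ℚ)/a := by field_simp; linarith
      have h7 : x = (a:ℚ) / r := by
        rw [← one_div_one_div x, h1xval.trans h6, one_div_div]
      -- coprimality
      have hcop' : Nat.Coprime r a := by
        have : Nat.gcd a N = Nat.gcd a r := by
          conv_lhs => rw [show N = c * a + r by omega]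
          rw [Nat.add_comm, Nat.gcd_add_mul_right_right]
        exact Nat.Coprime.symm (by rwa [Nat.Coprime, this] at hcop)
      -- IH
      have hsum : (d :: rest').sum = (gen r (a - r)).length + 2 :=
        ih a r ha2 (by omega) hra hcop' hrne (fun y hy => hpos y (by simp at hy ⊢; tauto))
          (fun _ => hlastr) h7
      -- length computation
      have hNa : N - a = (c - 1) * a + r := by
        obtain ⟨k, rfl⟩ : ∃ k, c = k + 1 := ⟨c - 1, by omega⟩
        have hmul : (k + 1) * a = k * a + a := by ring
        simp only [Nat.add_sub_cancel]
        omega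
      have hlen : (gen a (N - a)).length = c + (gen r (a - r)).length := by
        rw [hNa, gen_len_rep a r ha (by omega) (c - 1), gen_gt (by omega) hra,
          List.length_cons, gen_len_symm (a - r) r]
        omega
      simp only [List.sum_cons] at hsum ⊢
      omega

/-- For `N ≥ 2` and `a` coprime to `N` with `0 < a < N`, the sum `S_N(a)` of the partial
quotients in the continued fraction expansion `a/N = [0; c₁, …, cₖ]` (with positive partial
quotients and last quotient at least `2` whenever `k ≥ 2`) equals `|gen(a, N-a)| + 2`. -/
theorem sum_quotients_eq (N a : ℕ) (hN : 2 ≤ N) (ha : 0 < a) (haN : a < N)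
    (hcop : Nat.Coprime a N) (cs : List ℕ) (hne : cs ≠ [])
    (hpos : ∀ c ∈ cs, 1 ≤ c)
    (hlast : 2 ≤ cs.length → 2 ≤ cs.getLast hne)
    (hval : cfVal ((0 : ℕ) :: cs) = (a : ℚ) / (N : ℚ)) :
    cs.sum = (gen a (N - a)).length + 2 := by
  apply key_lemma cs N a hN ha haN hcop hne hpos hlast
  rcases cs with _ | ⟨c, rest⟩
  · exact absurd rfl hne
  have h1 : ((0:ℕ):ℚ) + 1 / cfVal (c :: rest) = (a:ℚ)/N := hval
  have h1' : 1 / cfVal (c :: rest) = (a:ℚ)/N := by push_cast at h1; linarith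
  rw [← one_div_one_div (cfVal (c :: rest)), h1', one_div_div]
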